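/- (Locality of the regularizing isomorphism ψ_T.) Let I ⊂ ℝ be a bounded open interval and let t : ℝ → ℝ be smooth with t′ ∈ 𝒮, lim_{x→±∞} t(x) = ±1/2 and supp t′ ∩ I = ∅. If F = (f₀,f₁) ∈ V_a is localized in I, i.e. f₀ = g′ with g ∈ 𝒮 and supp f₀ ⊆ I, f₁ ∈ 𝒮 with supp f₁′ ⊆ I, then F_c = F_q = F_∞ = 0, F_n := ∫_ℝ f₁ t′ dx = 0 and F_r := ∫_ℝ f₀ t dx = 0; hence F_t = F, i.e. ψ_T acts as the identity on observables localized causally disjoint from T: ψ_T(F) = (F, (0,0), (0,0)). -/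

import Mathlib

open MeasureTheory Filter Topology

/-- `f` is (the realization of) a real-valued Schwartz function. -/
def IsSchwartzFn (f : ℝ → ℝ) : Prop := ∃ g : SchwartzMap ℝ ℝ, ⇑g = f

lemma schwartz_tendsto_atTop (g : SchwartzMap ℝ ℝ) : Tendsto ⇑g atTop (𝓝 0) :=
  (g.toZeroAtInfty.zero_at_infty').mono_left atTop_le_cocompact

lemma schwartz_tendsto_atBot (g : SchwartzMap ℝ ℝ) : Tendsto ⇑g atBot (𝓝 0) :=
  (g.toZeroAtInfty.zero_at_infty').mono_left atBot_le_cocompact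

/-- constant on [x,y] when deriv vanishes there. -/
lemma const_of_deriv_zero_on {f : ℝ → ℝ} (hf : Differentiable ℝ f) {x y : ℝ} (hxy : x ≤ y)
    (h : ∀ z ∈ Set.Icc x y, deriv f z = 0) : f y = f x := by
  apply constant_of_has_deriv_right_zero (hf.continuous.continuousOn)
    (fun z hz => ?_) y ⟨hxy, le_rfl⟩
  have := (hf z).hasDerivAt
  rw [h z ⟨hz.1, hz.2.le⟩] at this
  exact this.hasDerivWithinAt

lemma eq_lim_of_deriv_zero_right {f : ℝ → ℝ} (hf : Differentiable ℝ f) {b L : ℝ}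
    (h : ∀ z, b ≤ z → deriv f z = 0) (hL : Tendsto f atTop (𝓝 L)) :
    ∀ x, b ≤ x → f x = L := by
  intro x hx
  have hev : f =ᶠ[atTop] fun _ => f x := by
    filter_upwards [eventually_ge_atTop x] with y hy
    exact const_of_deriv_zero_on hf hy (fun z hz => h z (hx.trans hz.1))
  exact (tendsto_nhds_unique tendsto_const_nhds (hL.congr' hev))

lemma eq_lim_of_deriv_zero_left {f : ℝ → ℝ} (hf : Differentiable ℝ f) {a L : ℝ}
    (h : ∀ z, z ≤ a → deriv f z = 0) (hL : Tendsto f atBot (𝓝 L)) :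
    ∀ x, x ≤ a → f x = L := by
  intro x hx
  have hev : f =ᶠ[atBot] fun _ => f x := by
    filter_upwards [eventually_le_atBot x] with y hy
    exact (const_of_deriv_zero_on hf hy (fun z hz => h z (hz.2.trans hx))).symm
  exact (tendsto_nhds_unique tendsto_const_nhds (hL.congr' hev))

/-- (Locality of the regularizing isomorphism `ψ_T`.)
Let `I = (a,b)` be a bounded open interval and `t` a regularizing function (smooth,
`t' ∈ 𝒮`, `t(±∞) = ±1/2`) with `supp t' ∩ I = ∅`.  If `F = (f₀,f₁) ∈ V_a` is localized
in `I` (`f₀ = g'`, `g ∈ 𝒮`, `supp f₀ ⊆ I`; `f₁ ∈ 𝒮` with `supp f₁' ⊆ I`), then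
`F_c = F_q = F_∞ = 0`, `F_n = ∫ f₁ t' = 0` and `F_r = ∫ f₀ t = 0`; hence `F_t = F`,
i.e. `ψ_T(F) = (F,(0,0),(0,0))`. -/
theorem stmt_13 (a b : ℝ) (t : ℝ → ℝ)
    (ht : ContDiff ℝ (⊤ : ℕ∞) t) (ht' : IsSchwartzFn (deriv t))
    (htp : Tendsto t atTop (𝓝 (1/2 : ℝ))) (htm : Tendsto t atBot (𝓝 (-(1/2) : ℝ)))
    (htloc : tsupport (deriv t) ∩ Set.Ioo a b = ∅)
    (f₀ f₁ : ℝ → ℝ) (g : SchwartzMap ℝ ℝ) (hf₀ : deriv ⇑g = f₀)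
    (hf₀loc : tsupport f₀ ⊆ Set.Ioo a b)
    (hf₁ : IsSchwartzFn f₁) (hf₁loc : tsupport (deriv f₁) ⊆ Set.Ioo a b)
    (Fp Fm : ℝ) (hFp : Tendsto f₁ atTop (𝓝 Fp)) (hFm : Tendsto f₁ atBot (𝓝 Fm)) :
    (∫ x, f₀ x) = 0 ∧ Fp - Fm = 0 ∧ (Fp + Fm) / 2 = 0 ∧
    (∫ x, f₁ x * deriv t x) = 0 ∧ (∫ x, f₀ x * t x) = 0 ∧
    (fun x => f₀ x - (∫ y, f₀ y) * deriv t x) = f₀ ∧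
    (fun x => f₁ x - (Fp - Fm) * t x - (Fp + Fm) / 2) = f₁ := by
  obtain ⟨F1, hF1⟩ := hf₁
  -- Fp = Fm = 0 since f₁ is Schwartz
  have hFp0 : Fp = 0 := tendsto_nhds_unique hFp (hF1 ▸ schwartz_tendsto_atTop F1)
  have hFm0 : Fm = 0 := tendsto_nhds_unique hFm (hF1 ▸ schwartz_tendsto_atBot F1)
  -- f₀ vanishes outside Ioo a b
  have hf₀z : ∀ x, x ∉ Set.Ioo a b → f₀ x = 0 := fun x hx =>
    image_eq_zero_of_notMem_tsupport (fun hm => hx (hf₀loc hm))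
  -- deriv t vanishes on Ioo a b
  have htz : ∀ x ∈ Set.Ioo a b, deriv t x = 0 := fun x hx =>
    image_eq_zero_of_notMem_tsupport (fun hm => Set.eq_empty_iff_forall_notMem.mp htloc x ⟨hm, hx⟩)
  -- f₁ vanishes outside Ioo a b
  have hf₁diff : Differentiable ℝ f₁ := hF1 ▸ F1.differentiable
  have hf₁dz : ∀ x, x ∉ Set.Ioo a b → deriv f₁ x = 0 := fun x hx =>
    image_eq_zero_of_notMem_tsupport (fun hm => hx (hf₁loc hm))
  have hf₁z : ∀ x, x ∉ Set.Ioo a b → f₁ x = 0 := by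
    intro x hx
    rw [Set.mem_Ioo] at hx
    rcases not_and_or.mp hx with hxa | hxb
    · have := eq_lim_of_deriv_zero_left hf₁diff
        (fun z hz => hf₁dz z (fun hm => absurd hm.1 (not_lt.mpr hz).elim)) hFm x (le_of_not_gt hxa)
      rw [this, hFm0]
    · have := eq_lim_of_deriv_zero_right hf₁diff
        (fun z hz => hf₁dz z (fun hm => absurd hm.2 (not_lt.mpr hz).elim)) hFp x (le_of_not_gt hxb)
      rw [this, hFp0]
  -- integral of f₀ is zero
  have hgderiv : ∀ x, HasDerivAt (⇑g) (f₀ x) x := fun x => by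
    have := (g.differentiable x).hasDerivAt
    rwa [hf₀] at this
  have hf₀int : Integrable f₀ := by
    have : Integrable (⇑(SchwartzMap.derivCLM ℝ ℝ g)) := SchwartzMap.integrable _
    have he : ⇑(SchwartzMap.derivCLM ℝ ℝ g) = f₀ := by
      funext x; rw [SchwartzMap.derivCLM_apply, hf₀]
    rwa [he] at this
  have hIc : (∫ x, f₀ x) = 0 := by
    rw [integral_of_hasDerivAt_of_tendsto hgderiv hf₀int
      (schwartz_tendsto_atBot g) (schwartz_tendsto_atTop g)]
    ring
  -- ∫ f₁ * t' = 0
  have hFn : (∫ x, f₁ x * deriv t x) = 0 := by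
    have : ∀ x, f₁ x * deriv t x = 0 := by
      intro x
      by_cases hx : x ∈ Set.Ioo a b
      · rw [htz x hx, mul_zero]
      · rw [hf₁z x hx, zero_mul]
    simp only [this, integral_zero]
  -- ∫ f₀ * t = 0
  have hFr : (∫ x, f₀ x * t x) = 0 := by
    rcases Set.eq_empty_or_nonempty (Set.Ioo a b) with he | ⟨m, hm⟩
    · have : ∀ x, f₀ x * t x = 0 := fun x => by
        rw [hf₀z x (he ▸ Set.notMem_empty x), zero_mul]
      simp only [this, integral_zero]
    · have htc : ∀ x ∈ Set.Ioo a b, t x = t m := by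
        intro x hx
        rcases le_total x m with h | h
        · exact (const_of_deriv_zero_on (ht.differentiable (by simp)) h
            (fun z hz => htz z ⟨lt_of_lt_of_le hx.1 hz.1, lt_of_le_of_lt hz.2 hm.2⟩)).symm
        · exact const_of_deriv_zero_on (ht.differentiable (by simp)) h
            (fun z hz => htz z ⟨lt_of_lt_of_le hm.1 hz.1, lt_of_le_of_lt hz.2 hx.2⟩)
      have hpt : ∀ x, f₀ x * t x = t m * f₀ x := by
        intro x
        by_cases hx : x ∈ Set.Ioo a b
        · rw [htc x hx]; ring
        · rw [hf₀z x hx]; ring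
      calc (∫ x, f₀ x * t x) = ∫ x, t m * f₀ x := by simp only [hpt]
        _ = t m * ∫ x, f₀ x := integral_const_mul _ _
        _ = 0 := by rw [hIc, mul_zero]
  refine ⟨hIc, by rw [hFp0, hFm0]; ring, by rw [hFp0, hFm0]; ring, hFn, hFr, ?_, ?_⟩
  · funext x; rw [hIc]; ring
  · funext x; rw [hFp0, hFm0]; ring
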